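/- arXiv:1501.04542 — 2 statements merged into one kernel-verified Lean document; each statement's English description precedes it below -/
import Mathlib

section
/- Let ζ₁,…,ζₙ be i.i.d. real random variables, S_i the random walk, σ = max{i ≤ n : S_i ≤ 0}. Define N⁺ = Σ_{i=1}^σ 1{S_i ≥ 0} and Ñ⁻ = Σ_{i=0}^{σ−1} 1{S_i ≤ S_σ}. Then N⁺ and Ñ⁻ have the same distribution. -/
open MeasureTheory ProbabilityTheory Finset

/-!
On the event `σ = k`, reverse the order of the first `k` increments. The reversed walk is
`S'_i = S_k - S_{k-i}` for `i ≤ k` and `S'_i = S_i` for `i ≥ k`, so it has the same last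
nonpositive time `k`, and `S'_i ≥ 0` exactly when `S_{k-i} ≤ S_k`: the reversal maps `{σ = k}` onto
itself and turns `N⁺` into `Ñ⁻`. The increments are i.i.d., so their joint law is invariant under
this permutation; summing over `k` gives equality of the laws.
-/

namespace MeasureTheory

theorem Measure.map_eq_map_of_forall_fiber_measurePreserving {α β ι : Type*}
    [MeasurableSpace α] [MeasurableSpace β] [MeasurableSpace ι] [Countable ι]
    [MeasurableSingletonClass ι] {ν : Measure α} {s : α → ι} {f g : α → β}
    (hs : Measurable s) (hf : Measurable f) (hg : Measurable g)
    (h : ∀ k, ∃ T : α → α, MeasurePreserving T ν ν ∧ (∀ x, s (T x) = k ↔ s x = k) ∧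
      ∀ x, s x = k → f (T x) = g x) :
    ν.map f = ν.map g := by
  have hfiber : ∀ B, ν B = ∑' k, ν (B ∩ s ⁻¹' {k}) := fun B => by
    have := tsum_measure_preimage_singleton (μ := ν.restrict B) Set.countable_univ
      fun k _ => hs (measurableSet_singleton k)
    rw [tsum_univ (fun k => ν.restrict B (s ⁻¹' {k}))] at this
    simpa [Measure.restrict_apply (hs (measurableSet_singleton _)), Set.inter_comm]
      using this.symm
  ext A hA
  rw [Measure.map_apply hf hA, Measure.map_apply hg hA, hfiber, hfiber]
  refine tsum_congr fun k => ?_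
  obtain ⟨T, hT, hsT, hfT⟩ := h k
  rw [← hT.measure_preimage ((hf hA).inter (hs (measurableSet_singleton k))).nullMeasurableSet]
  congr 1
  ext x
  simp only [Set.mem_preimage, Set.mem_inter_iff, Set.mem_singleton_iff, hsT]
  exact ⟨fun ⟨hx, hk⟩ => ⟨hfT x hk ▸ hx, hk⟩, fun ⟨hx, hk⟩ => ⟨(hfT x hk).symm ▸ hx, hk⟩⟩

theorem measurePreserving_pi_comp_perm {ι β : Type*} [Fintype ι] [MeasurableSpace β]
    (m : Measure β) [SigmaFinite m] (e : Equiv.Perm ι) :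
    MeasurePreserving (fun x : ι → β => x ∘ e) (Measure.pi fun _ => m)
      (Measure.pi fun _ => m) := by
  convert measurePreserving_arrowCongr' (fun _ => m) (fun _ => m) e.symm
    (MeasurableEquiv.refl β) fun _ => MeasurePreserving.id m
  ext x
  simp [MeasurableEquiv.arrowCongr', Equiv.arrowCongr']

end MeasureTheory

namespace ProbabilityTheory

theorem iIndepFun.map_fun_comp_eq_pi {Ω ι κ β : Type*} [MeasurableSpace Ω] [MeasurableSpace β]
    [Fintype κ] {μ : Measure Ω} [IsProbabilityMeasure μ] {ζ : ι → Ω → β} {m : Measure β}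
    {g : κ → ι} (hζ : ∀ i, AEMeasurable (ζ i) μ) (hind : iIndepFun ζ μ)
    (hident : ∀ i, μ.map (ζ i) = m) (hg : g.Injective) :
    μ.map (fun ω k => ζ (g k) ω) = Measure.pi fun _ => m := by
  rw [(iIndepFun_iff_map_fun_eq_pi_map fun k => hζ (g k)).1 (hind.precomp hg)]
  simp_rw [hident]

end ProbabilityTheory

theorem Measurable.apply_family {α β ι : Type*} [MeasurableSpace α] [MeasurableSpace β]
    [MeasurableSpace ι] [Countable ι] [MeasurableSingletonClass ι] {σ : α → ι}
    {F : ι → α → β} (hσ : Measurable σ) (hF : ∀ k, Measurable (F k)) :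
    Measurable fun x => F (σ x) x :=
  (measurable_from_prod_countable_left (f := fun p : α × ι => F p.2 p.1) hF).comp
    (measurable_id.prodMk hσ)

namespace RandomWalk

noncomputable def lastNonpos (n : ℕ) (s : ℕ → ℝ) : ℕ := sSup {i | i ≤ n ∧ s i ≤ 0}

/-- `N⁺` of the walk `s` -/
noncomputable def numNonneg (n : ℕ) (s : ℕ → ℝ) : ℕ :=
  ∑ i ∈ Icc 1 (lastNonpos n s), if 0 ≤ s i then 1 else 0

/-- `Ñ⁻` of the walk `s` -/
noncomputable def numLeLast (n : ℕ) (s : ℕ → ℝ) : ℕ :=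
  ∑ i ∈ range (lastNonpos n s), if s i ≤ s (lastNonpos n s) then 1 else 0

variable {n k : ℕ} {s t : ℕ → ℝ}

theorem lastNonpos_le : lastNonpos n s ≤ n := csSup_le' fun _ hi => hi.1

theorem lastNonpos_eq_iff (h0 : s 0 ≤ 0) :
    lastNonpos n s = k ↔ k ≤ n ∧ s k ≤ 0 ∧ ∀ i, k < i → i ≤ n → 0 < s i := by
  have hbdd : BddAbove {i | i ≤ n ∧ s i ≤ 0} := ⟨n, fun _ hi => hi.1⟩
  have hmem : lastNonpos n s ∈ {i | i ≤ n ∧ s i ≤ 0} := Nat.sSup_mem ⟨0, n.zero_le, h0⟩ hbdd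
  constructor
  · rintro rfl
    refine ⟨hmem.1, hmem.2, fun i hlt hi => lt_of_not_ge fun hsi => ?_⟩
    exact (le_csSup hbdd ⟨hi, hsi⟩).not_gt hlt
  · rintro ⟨hk, hsk, hpos⟩
    refine le_antisymm (not_lt.1 fun hlt => ?_) (le_csSup hbdd ⟨hk, hsk⟩)
    exact (hpos _ hlt hmem.1).not_ge hmem.2

theorem lastNonpos_congr (h : ∀ i ≤ n, s i = t i) : lastNonpos n s = lastNonpos n t := by
  unfold lastNonpos
  congr 1
  ext i
  exact and_congr_right fun hi => by rw [h i hi]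

theorem numNonneg_congr (h : ∀ i ≤ n, s i = t i) : numNonneg n s = numNonneg n t := by
  unfold numNonneg
  rw [lastNonpos_congr h]
  refine sum_congr rfl fun i hi => ?_
  rw [h i ((mem_Icc.1 hi).2.trans lastNonpos_le)]

theorem numLeLast_congr (h : ∀ i ≤ n, s i = t i) : numLeLast n s = numLeLast n t := by
  unfold numLeLast
  rw [lastNonpos_congr h, h _ lastNonpos_le]
  refine sum_congr rfl fun i hi => ?_
  rw [h i ((mem_range.1 hi).le.trans lastNonpos_le)]

theorem lastNonpos_eq_iff_of_eqOn_Ici (hs0 : s 0 ≤ 0) (ht0 : t 0 ≤ 0)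
    (h : ∀ i, k ≤ i → t i = s i) : lastNonpos n t = k ↔ lastNonpos n s = k := by
  rw [lastNonpos_eq_iff hs0, lastNonpos_eq_iff ht0, h k le_rfl]
  refine and_congr_right fun _ => and_congr_right fun _ => ?_
  exact forall_congr' fun i => imp_congr_right fun hi => by rw [h i hi.le]

theorem numNonneg_eq_numLeLast_of_reflect (ht : lastNonpos n t = k) (hs : lastNonpos n s = k)
    (h : ∀ i ≤ k, t i = s k - s (k - i)) : numNonneg n t = numLeLast n s := by
  rw [numNonneg, numLeLast, ht, hs]
  refine sum_nbij' (k - ·) (k - ·) ?_ ?_ ?_ ?_ fun i hi => ?_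
  · intro i hi; simp only [mem_Icc, mem_range] at hi ⊢; omega
  · intro i hi; simp only [mem_Icc, mem_range] at hi ⊢; omega
  · intro i hi; simp only [mem_Icc] at hi; omega
  · intro i hi; simp only [mem_range] at hi; omega
  · simp only [h i (mem_Icc.1 hi).2, sub_nonneg]

def incr (x : Fin n → ℝ) (j : ℕ) : ℝ := if h : j < n then x ⟨j, h⟩ else 0

def partialSum (x : Fin n → ℝ) (i : ℕ) : ℝ := ∑ j ∈ range i, incr x j

@[simp] theorem partialSum_zero (x : Fin n → ℝ) : partialSum x 0 = 0 := by simp [partialSum]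

def prefixRev (hk : k ≤ n) : Equiv.Perm (Fin n) :=
  Function.Involutive.toPerm (fun j => if h : (j : ℕ) < k then ⟨k - 1 - j, by omega⟩ else j)
    (by intro j; ext; dsimp only; split_ifs <;> simp_all <;> omega)

theorem prefixRev_val (hk : k ≤ n) (j : Fin n) :
    (prefixRev hk j : ℕ) = if (j : ℕ) < k then k - 1 - j else j := by
  change ((if h : (j : ℕ) < k then ⟨k - 1 - j, by omega⟩ else j : Fin n) : ℕ) = _
  split_ifs <;> rfl

theorem incr_comp_prefixRev (hk : k ≤ n) (x : Fin n → ℝ) (j : ℕ) :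
    incr (x ∘ prefixRev hk) j = incr x (if j < k then k - 1 - j else j) := by
  by_cases hjn : j < n
  · have hval := prefixRev_val hk ⟨j, hjn⟩
    split_ifs at hval ⊢ with hj
    · simp only [incr, dif_pos hjn, dif_pos (show k - 1 - j < n by omega), Function.comp_apply]
      congr 1; ext; exact hval
    · simp only [incr, dif_pos hjn, Function.comp_apply]
      congr 1; ext; exact hval
  · simp [incr, hjn, show ¬ j < k by omega]

theorem partialSum_comp_prefixRev_of_le (hk : k ≤ n) (x : Fin n → ℝ) {i : ℕ} (hi : i ≤ k) :
    partialSum (x ∘ prefixRev hk) i = partialSum x k - partialSum x (k - i) := by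
  rw [partialSum, partialSum, partialSum, ← sum_Ico_eq_sub _ (Nat.sub_le k i),
    sum_Ico_eq_sum_range, Nat.sub_sub_self hi, ← sum_range_reflect]
  refine sum_congr rfl fun j hj => ?_
  have hj := mem_range.1 hj
  rw [incr_comp_prefixRev, if_pos (by omega)]
  congr 1
  omega

theorem partialSum_comp_prefixRev_of_ge (hk : k ≤ n) (x : Fin n → ℝ) {i : ℕ} (hi : k ≤ i) :
    partialSum (x ∘ prefixRev hk) i = partialSum x i := by
  have hprefix := partialSum_comp_prefixRev_of_le hk x le_rfl
  rw [Nat.sub_self, partialSum_zero, sub_zero] at hprefix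
  rw [partialSum, partialSum] at hprefix
  rw [partialSum, partialSum, ← sum_range_add_sum_Ico _ hi, ← sum_range_add_sum_Ico _ hi, hprefix]
  congr 1
  refine sum_congr rfl fun j hj => ?_
  rw [incr_comp_prefixRev, if_neg (by simp only [mem_Ico] at hj; omega)]

theorem lastNonpos_partialSum_comp_prefixRev (hk : k ≤ n) (x : Fin n → ℝ) :
    lastNonpos n (partialSum (x ∘ prefixRev hk)) = k ↔ lastNonpos n (partialSum x) = k :=
  lastNonpos_eq_iff_of_eqOn_Ici (by simp) (by simp) fun _ =>
    partialSum_comp_prefixRev_of_ge hk x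

theorem numNonneg_partialSum_comp_prefixRev (hk : k ≤ n) {x : Fin n → ℝ}
    (hx : lastNonpos n (partialSum x) = k) :
    numNonneg n (partialSum (x ∘ prefixRev hk)) = numLeLast n (partialSum x) :=
  numNonneg_eq_numLeLast_of_reflect ((lastNonpos_partialSum_comp_prefixRev hk x).2 hx) hx
    fun _ => partialSum_comp_prefixRev_of_le hk x

theorem measurable_partialSum (i : ℕ) : Measurable fun x : Fin n → ℝ => partialSum x i := by
  refine Finset.measurable_sum _ fun j _ => ?_
  unfold incr
  split_ifs
  · exact measurable_pi_apply _
  · exact measurable_const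

theorem measurableSet_lastNonpos_partialSum_eq (k : ℕ) :
    MeasurableSet {x : Fin n → ℝ | lastNonpos n (partialSum x) = k} := by
  simp only [lastNonpos_eq_iff (partialSum_zero _).le, Set.ofPred_and]
  refine .inter (.const _) (.inter (measurableSet_le (measurable_partialSum k) measurable_const) ?_)
  simp only [Set.ofPred_forall]
  exact .iInter fun i => .iInter fun _ => .iInter fun _ =>
    measurableSet_lt measurable_const (measurable_partialSum i)

theorem measurable_lastNonpos_partialSum :
    Measurable fun x : Fin n → ℝ => lastNonpos n (partialSum x) :=
  measurable_to_countable' measurableSet_lastNonpos_partialSum_eq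

theorem measurable_numNonneg_partialSum :
    Measurable fun x : Fin n → ℝ => numNonneg n (partialSum x) :=
  measurable_lastNonpos_partialSum.apply_family fun m => Finset.measurable_sum (Icc 1 m) fun i _ =>
    Measurable.ite (measurableSet_le measurable_const (measurable_partialSum i))
      measurable_const measurable_const

theorem measurable_numLeLast_partialSum :
    Measurable fun x : Fin n → ℝ => numLeLast n (partialSum x) :=
  measurable_lastNonpos_partialSum.apply_family fun m => Finset.measurable_sum (range m) fun i _ =>
    Measurable.ite (measurableSet_le (measurable_partialSum i) (measurable_partialSum m))
      measurable_const measurable_const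

end RandomWalk

open RandomWalk in
/-- N⁺ = Σ_{i=1}^σ 1{S_i ≥ 0} and Ñ⁻ = Σ_{i=0}^{σ−1} 1{S_i ≤ S_σ} have the same
distribution. -/
theorem stmt_3 {Ω : Type*} [MeasurableSpace Ω] (μ : Measure Ω) [IsProbabilityMeasure μ]
    (n : ℕ) (ζ : ℕ → Ω → ℝ)
    (hmeas : ∀ i, Measurable (ζ i))
    (hindep : ProbabilityTheory.iIndepFun ζ μ)
    (hident : ∀ i, μ.map (ζ i) = μ.map (ζ 0))
    (S : ℕ → Ω → ℝ) (hS : ∀ i ω, S i ω = ∑ j ∈ Finset.range i, ζ j ω)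
    (σ : Ω → ℕ) (hσ : ∀ ω, σ ω = sSup {i | i ≤ n ∧ S i ω ≤ 0})
    (Nplus Ntildeminus : Ω → ℕ)
    (hNplus : ∀ ω, Nplus ω = ∑ i ∈ Finset.Icc 1 (σ ω), if 0 ≤ S i ω then 1 else 0)
    (hNtildeminus : ∀ ω, Ntildeminus ω =
      ∑ i ∈ Finset.range (σ ω), if S i ω ≤ S (σ ω) ω then 1 else 0) :
    μ.map Nplus = μ.map Ntildeminus := by
  set X : Ω → Fin n → ℝ := fun ω i => ζ i ω
  have hX : Measurable X := measurable_pi_lambda _ fun i => hmeas i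
  have hwalk : ∀ ω, ∀ i ≤ n, S i ω = partialSum (X ω) i := fun ω i hi => by
    rw [hS, partialSum]
    exact sum_congr rfl fun j hj => by simp [incr, X, show j < n by have := mem_range.1 hj; omega]
  have hNplus' : Nplus = (fun x => numNonneg n (partialSum x)) ∘ X := funext fun ω => by
    rw [hNplus, hσ]
    exact numNonneg_congr (hwalk ω)
  have hNtildeminus' : Ntildeminus = (fun x => numLeLast n (partialSum x)) ∘ X :=
    funext fun ω => by
      rw [hNtildeminus, hσ]
      exact numLeLast_congr (hwalk ω)
  have hlaw : ∀ e : Equiv.Perm (Fin n), MeasurePreserving (· ∘ e) (μ.map X) (μ.map X) := by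
    have := Measure.isProbabilityMeasure_map (μ := μ) (hmeas 0).aemeasurable
    rw [iIndepFun.map_fun_comp_eq_pi (fun i => (hmeas i).aemeasurable) hindep hident
      Fin.val_injective]
    exact measurePreserving_pi_comp_perm _
  rw [hNplus', hNtildeminus', ← Measure.map_map measurable_numNonneg_partialSum hX,
    ← Measure.map_map measurable_numLeLast_partialSum hX]
  refine Measure.map_eq_map_of_forall_fiber_measurePreserving measurable_lastNonpos_partialSum
    measurable_numNonneg_partialSum measurable_numLeLast_partialSum fun k => ?_
  by_cases hk : k ≤ n
  · exact ⟨_, hlaw (prefixRev hk), lastNonpos_partialSum_comp_prefixRev hk,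
      fun _ => numNonneg_partialSum_comp_prefixRev hk⟩
  · exact ⟨id, .id _, fun _ => Iff.rfl, fun _ hx => absurd (hx ▸ lastNonpos_le) hk⟩
end

section
/- Let ζ₁,…,ζₙ be i.i.d. real random variables, S_i the random walk, σ = max{i ≤ n : S_i ≤ 0}, S̲ = min{S_i : i ≤ σ}, S̄ = max{S_i : i ≤ σ}. Define ←F = σ − min{i ≤ σ : S_i = S̲} and →G = max{i ≤ σ : S_i = S̄}. Then ←F and →G have the same distribution. -/
/-!
Reversing the first `σ` increments replaces the path `S_0, …, S_σ` by `S_σ - S_{σ-i}` and leaves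
it unchanged after time `σ`; since `S_σ ≤ 0 < S_i` for `σ < i ≤ n`, the reversed walk has the same
`σ`, and its last maximum on `[0, σ]` sits at `σ` minus the first minimum of the original path.
The law of an i.i.d. sequence is invariant under every fixed permutation of the coordinates. On
each fibre `{σ = k}`, which it maps to itself, the random reversal acts by the fixed reversal of
the first `k` coordinates, so it preserves the law; and it carries `←F` to `→G`.
-/

open MeasureTheory Finset

section MeasurePreserving

variable {α ι : Type*} [MeasurableSpace α] [MeasurableSpace ι] [Countable ι]
  [MeasurableSingletonClass ι] {P : Measure α} {τ : α → ι}

lemma measure_eq_tsum_inter_fiber (hτ : Measurable τ) {C : Set α} (hC : MeasurableSet C) :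
    P C = ∑' i, P (C ∩ τ ⁻¹' {i}) := by
  rw [← measure_iUnion (fun i j hij => ?_) fun i => hC.inter (hτ (measurableSet_singleton i))]
  · congr 1
    ext x
    simp
  · exact Set.disjoint_left.2 fun x hi hj => hij (hi.2.symm.trans hj.2)

theorem measurePreserving_fiberwise (hτ : Measurable τ) {f : ι → α → α}
    (hf : ∀ i, MeasurePreserving (f i) P P) (hfτ : ∀ i x, τ (f i x) = i ↔ τ x = i) :
    MeasurePreserving (fun x => f (τ x) x) P P := by
  have hmeas : Measurable fun x => f (τ x) x :=
    (measurable_from_prod_countable_left (f := fun p : α × ι => f p.2 p.1)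
      fun i => (hf i).measurable).comp (measurable_id.prodMk hτ)
  refine ⟨hmeas, Measure.ext fun B hB => ?_⟩
  have hfiber : ∀ i, (fun x => f (τ x) x) ⁻¹' B ∩ τ ⁻¹' {i} = f i ⁻¹' (B ∩ τ ⁻¹' {i}) := by
    intro i
    ext x
    simp only [Set.mem_inter_iff, Set.mem_preimage, Set.mem_singleton_iff, hfτ]
    constructor <;> rintro ⟨hx, rfl⟩ <;> exact ⟨hx, rfl⟩
  rw [Measure.map_apply hmeas hB, measure_eq_tsum_inter_fiber hτ (hmeas hB),
    measure_eq_tsum_inter_fiber hτ hB]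
  congr 1
  funext i
  rw [hfiber, (hf i).measure_preimage (hB.inter (hτ (measurableSet_singleton i))).nullMeasurableSet]

end MeasurePreserving

lemma Measurable.of_factorsThrough {α β γ : Type*} [MeasurableSpace α] [MeasurableSpace β]
    [MeasurableSpace γ] [Countable γ] [MeasurableSingletonClass γ] {f : α → β} {g : α → γ}
    (hg : Measurable g) (hfg : f.FactorsThrough g) : Measurable f := by
  rcases isEmpty_or_nonempty α with _ | ⟨⟨a⟩⟩
  · exact Subsingleton.measurable
  have : f = Function.extend g f (fun _ => f a) ∘ g := funext fun b => (hfg.extend_apply _ b).symm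
  rw [this]
  exact (measurable_of_countable _).comp hg

lemma measurePreserving_comp_perm_infinitePi {ι β : Type*} [MeasurableSpace β] (ν : Measure β)
    [IsProbabilityMeasure ν] (e : Equiv.Perm ι) :
    MeasurePreserving (fun x : ι → β => x ∘ e) (Measure.infinitePi fun _ => ν)
      (Measure.infinitePi fun _ => ν) := by
  refine ⟨by fun_prop, ?_⟩
  convert Measure.infinitePi_map_piCongrLeft (X := fun _ : ι => β) (fun _ => ν) e.symm using 2
  ext x i
  simp [MeasurableEquiv.coe_piCongrLeft, Equiv.piCongrLeft_apply]

namespace RandomWalk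

noncomputable def walk (x : ℕ → ℝ) (i : ℕ) : ℝ := ∑ j ∈ range i, x j

@[simp] lemma walk_zero (x : ℕ → ℝ) : walk x 0 = 0 := rfl

lemma walk_succ (x : ℕ → ℝ) (i : ℕ) : walk x (i + 1) = walk x i + x i :=
  sum_range_succ x i

lemma measurable_walk (i : ℕ) : Measurable fun x : ℕ → ℝ => walk x i := by
  unfold walk; fun_prop

section Argextrema

variable {α : Type*} [ConditionallyCompleteLinearOrder α] (k : ℕ) (s : ℕ → α)

noncomputable def firstArgmin : ℕ := sInf {i | i ≤ k ∧ s i = sInf (s '' Set.Iic k)}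

noncomputable def lastArgmax : ℕ := sSup {i | i ≤ k ∧ s i = sSup (s '' Set.Iic k)}

variable {k s}

lemma eq_csInf_image_Iic_iff {i : ℕ} (hi : i ≤ k) :
    s i = sInf (s '' Set.Iic k) ↔ ∀ j ≤ k, s i ≤ s j := by
  refine ⟨fun h j hj => h ▸ csInf_le ((Set.finite_Iic k).image s).bddBelow
    (Set.mem_image_of_mem s (Set.mem_Iic.2 hj)),
    fun h => (IsLeast.csInf_eq (s := s '' Set.Iic k) ⟨⟨i, hi, rfl⟩, ?_⟩).symm⟩
  rintro _ ⟨j, hj, rfl⟩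
  exact h j hj

lemma eq_csSup_image_Iic_iff {i : ℕ} (hi : i ≤ k) :
    s i = sSup (s '' Set.Iic k) ↔ ∀ j ≤ k, s j ≤ s i := by
  refine ⟨fun h j hj => h ▸ le_csSup ((Set.finite_Iic k).image s).bddAbove
    (Set.mem_image_of_mem s (Set.mem_Iic.2 hj)),
    fun h => (IsGreatest.csSup_eq (s := s '' Set.Iic k) ⟨⟨i, hi, rfl⟩, ?_⟩).symm⟩
  rintro _ ⟨j, hj, rfl⟩
  exact h j hj

lemma firstArgmin_eq_sInf : firstArgmin k s = sInf {i | i ≤ k ∧ ∀ j ≤ k, s i ≤ s j} := by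
  unfold firstArgmin
  congr 1
  ext i
  exact and_congr_right eq_csInf_image_Iic_iff

lemma lastArgmax_eq_sSup : lastArgmax k s = sSup {i | i ≤ k ∧ ∀ j ≤ k, s j ≤ s i} := by
  unfold lastArgmax
  congr 1
  ext i
  exact and_congr_right eq_csSup_image_Iic_iff

lemma isLeast_firstArgmin : IsLeast {i | i ≤ k ∧ ∀ j ≤ k, s i ≤ s j} (firstArgmin k s) := by
  obtain ⟨i, hi, hmin⟩ := (range (k + 1)).exists_min_image s ⟨0, by simp⟩
  rw [firstArgmin_eq_sInf]
  refine ⟨Nat.sInf_mem ⟨i, by simpa [Nat.lt_succ_iff] using hi, fun j hj => hmin j ?_⟩,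
    fun j hj => Nat.sInf_le hj⟩
  simpa [Nat.lt_succ_iff] using hj

lemma lastArgmax_eq_sub_firstArgmin {t : ℕ → α}
    (hts : ∀ i ≤ k, ∀ j ≤ k, (t i ≤ t j ↔ s (k - j) ≤ s (k - i))) :
    lastArgmax k t = k - firstArgmin k s := by
  obtain ⟨⟨hmk, hmin⟩, hleast⟩ := isLeast_firstArgmin (k := k) (s := s)
  refine lastArgmax_eq_sSup.trans (IsGreatest.csSup_eq ⟨⟨Nat.sub_le _ _, fun j hj => ?_⟩, ?_⟩)
  · rw [hts j hj _ (Nat.sub_le _ _), Nat.sub_sub_self hmk]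
    exact hmin _ (Nat.sub_le _ _)
  · rintro i ⟨hik, hi⟩
    have : firstArgmin k s ≤ k - i := hleast ⟨Nat.sub_le _ _, fun j hj => ?_⟩
    · omega
    have := (hts (k - j) (Nat.sub_le _ _) i hik).1 (hi (k - j) (Nat.sub_le _ _))
    rwa [Nat.sub_sub_self hj] at this

lemma lastArgmax_congr {t : ℕ → α} (hst : ∀ i ≤ k, ∀ j ≤ k, (s i ≤ s j ↔ t i ≤ t j)) :
    lastArgmax k s = lastArgmax k t := by
  simp only [lastArgmax_eq_sSup]
  congr 1
  ext i
  exact and_congr_right fun hi => forall₂_congr fun j hj => hst j hj i hi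

end Argextrema

section Reflection

variable (n k : ℕ) (s : ℕ → ℝ)

noncomputable def lastNonposTime : ℕ := sSup {i | i ≤ n ∧ s i ≤ 0}

noncomputable def timeAfterFirstMin : ℕ :=
  lastNonposTime n s - firstArgmin (lastNonposTime n s) s

noncomputable def lastMaxTime : ℕ := lastArgmax (lastNonposTime n s) s

def reflectAt (i : ℕ) : ℝ := if i ≤ k then s k - s (k - i) else s i

variable {n k s}

lemma isGreatest_lastNonposTime (hs : s 0 ≤ 0) :
    IsGreatest {i | i ≤ n ∧ s i ≤ 0} (lastNonposTime n s) :=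
  ⟨Nat.sSup_mem ⟨0, by simpa using hs⟩ ⟨n, fun _ hi => hi.1⟩,
    fun _ hi => le_csSup ⟨n, fun _ hj => hj.1⟩ hi⟩

lemma lastNonposTime_congr {t : ℕ → ℝ} (hs : s 0 = 0) (ht : t 0 = 0)
    (hst : ∀ i ≤ n, ∀ j ≤ n, (s i ≤ s j ↔ t i ≤ t j)) :
    lastNonposTime n s = lastNonposTime n t := by
  unfold lastNonposTime
  congr 1
  ext i
  refine and_congr_right fun hi => ?_
  simpa only [hs, ht] using hst i hi 0 (Nat.zero_le n)

lemma lastMaxTime_congr {t : ℕ → ℝ} (hs : s 0 = 0) (ht : t 0 = 0)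
    (hst : ∀ i ≤ n, ∀ j ≤ n, (s i ≤ s j ↔ t i ≤ t j)) :
    lastMaxTime n s = lastMaxTime n t := by
  have hσ := lastNonposTime_congr hs ht hst
  have hσn := (isGreatest_lastNonposTime (n := n) hs.le).1.1
  unfold lastMaxTime
  rw [← hσ]
  exact lastArgmax_congr fun i hi j hj => hst i (hi.trans hσn) j (hj.trans hσn)

lemma lastNonposTime_reflectAt (hs : s 0 = 0) (hk : lastNonposTime n s = k) :
    lastNonposTime n (reflectAt k s) = k := by
  obtain ⟨⟨hkn, hsk⟩, hmax⟩ := hk ▸ isGreatest_lastNonposTime hs.le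
  refine (IsGreatest.csSup_eq ⟨⟨hkn, by simpa [reflectAt, hs] using hsk⟩, ?_⟩)
  rintro i ⟨hin, hi⟩
  by_contra! hki
  rw [reflectAt, if_neg (not_le.2 hki)] at hi
  exact (not_le.2 hki) (hmax ⟨hin, hi⟩)

lemma lastMaxTime_reflectAt (hs : s 0 = 0) (hk : lastNonposTime n s = k) :
    lastMaxTime n (reflectAt k s) = timeAfterFirstMin n s := by
  rw [lastMaxTime, lastNonposTime_reflectAt hs hk, timeAfterFirstMin, hk]
  refine lastArgmax_eq_sub_firstArgmin fun i hi j hj => ?_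
  rw [reflectAt, if_pos hi, reflectAt, if_pos hj]
  exact sub_le_sub_iff_left _

end Reflection

section Reversal

def revPerm (k : ℕ) : Equiv.Perm ℕ :=
  Function.Involutive.toPerm (fun j => if j < k then k - 1 - j else j) fun j => by
    by_cases hj : j < k
    · simp only [hj, if_true, show k - 1 - j < k by omega]
      omega
    · simp only [hj, if_false]

lemma revPerm_involutive (k : ℕ) : Function.Involutive (revPerm k) :=
  Function.Involutive.toPerm_involutive _

lemma revPerm_apply_of_lt {k j : ℕ} (hj : j < k) : revPerm k j = k - 1 - j := if_pos hj

lemma revPerm_apply_of_le {k j : ℕ} (hj : k ≤ j) : revPerm k j = j := if_neg (not_lt.2 hj)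

lemma walk_comp_revPerm_of_le (x : ℕ → ℝ) {k i : ℕ} (hi : i ≤ k) :
    walk (x ∘ revPerm k) i = walk x k - walk x (k - i) := by
  induction i with
  | zero => simp
  | succ i ih =>
    rw [walk_succ, ih (by omega), Function.comp_apply, revPerm_apply_of_lt (by omega),
      show k - i = k - 1 - i + 1 by omega, walk_succ, show k - (i + 1) = k - 1 - i by omega]
    ring

lemma walk_comp_revPerm_of_ge (x : ℕ → ℝ) {k i : ℕ} (hi : k ≤ i) :
    walk (x ∘ revPerm k) i = walk x i := by
  induction i, hi using Nat.le_induction with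
  | base => simp [walk_comp_revPerm_of_le x le_rfl]
  | succ i hki ih => rw [walk_succ, walk_succ, ih, Function.comp_apply, revPerm_apply_of_le hki]

lemma walk_comp_revPerm (x : ℕ → ℝ) (k : ℕ) :
    walk (x ∘ revPerm k) = reflectAt k (walk x) := by
  funext i
  unfold reflectAt
  split_ifs with hik
  exacts [walk_comp_revPerm_of_le x hik, walk_comp_revPerm_of_ge x (le_of_not_ge hik)]

variable {n : ℕ}

lemma lastNonposTime_walk_comp_revPerm_iff (x : ℕ → ℝ) (k : ℕ) :
    lastNonposTime n (walk (x ∘ revPerm k)) = k ↔ lastNonposTime n (walk x) = k := by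
  refine ⟨fun h => ?_, fun h => walk_comp_revPerm x k ▸ lastNonposTime_reflectAt (walk_zero x) h⟩
  have hrev := walk_comp_revPerm (x ∘ revPerm k) k ▸
    lastNonposTime_reflectAt (walk_zero _) h
  rwa [Function.comp_assoc, (revPerm_involutive k).comp_self, Function.comp_id] at hrev

lemma lastMaxTime_walk_comp_revPerm {x : ℕ → ℝ} {k : ℕ} (hk : lastNonposTime n (walk x) = k) :
    lastMaxTime n (walk (x ∘ revPerm k)) = timeAfterFirstMin n (walk x) := by
  rw [walk_comp_revPerm]
  exact lastMaxTime_reflectAt (walk_zero x) hk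

end Reversal

section Measurability

def orderPattern (n : ℕ) (s : ℕ → ℝ) : Fin (n + 1) → Fin (n + 1) → Prop :=
  fun i j => s i ≤ s j

lemma le_iff_le_of_orderPattern_eq {n : ℕ} {s t : ℕ → ℝ}
    (h : orderPattern n s = orderPattern n t) :
    ∀ i ≤ n, ∀ j ≤ n, (s i ≤ s j ↔ t i ≤ t j) := fun i hi j hj =>
  Iff.of_eq (congrFun₂ h ⟨i, Nat.lt_succ_of_le hi⟩ ⟨j, Nat.lt_succ_of_le hj⟩)

lemma measurable_orderPattern_walk (n : ℕ) : Measurable fun x => orderPattern n (walk x) :=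
  measurable_pi_lambda _ fun i => measurable_pi_lambda _ fun j =>
    measurableSet_setOfPred.1 (measurableSet_le (measurable_walk i) (measurable_walk j))

lemma measurable_lastNonposTime_walk (n : ℕ) : Measurable fun x => lastNonposTime n (walk x) :=
  (measurable_orderPattern_walk n).of_factorsThrough fun _ _ h =>
    lastNonposTime_congr (walk_zero _) (walk_zero _) (le_iff_le_of_orderPattern_eq h)

lemma measurable_lastMaxTime_walk (n : ℕ) : Measurable fun x => lastMaxTime n (walk x) :=
  (measurable_orderPattern_walk n).of_factorsThrough fun _ _ h =>
    lastMaxTime_congr (walk_zero _) (walk_zero _) (le_iff_le_of_orderPattern_eq h)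

end Measurability

end RandomWalk

open RandomWalk in
/-- ←F = σ − min{i ≤ σ : S_i = min_{j ≤ σ} S_j} and →G = max{i ≤ σ : S_i = max_{j ≤ σ} S_j}
have the same distribution. -/
theorem stmt_5 {Ω : Type*} [MeasurableSpace Ω] (μ : Measure Ω) [IsProbabilityMeasure μ]
    (n : ℕ) (ζ : ℕ → Ω → ℝ)
    (hmeas : ∀ i, Measurable (ζ i))
    (hindep : ProbabilityTheory.iIndepFun ζ μ)
    (hident : ∀ i, μ.map (ζ i) = μ.map (ζ 0))
    (S : ℕ → Ω → ℝ) (hS : ∀ i ω, S i ω = ∑ j ∈ Finset.range i, ζ j ω)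
    (σ : Ω → ℕ) (hσ : ∀ ω, σ ω = sSup {i | i ≤ n ∧ S i ω ≤ 0})
    (F' G : Ω → ℕ)
    (hF' : ∀ ω, F' ω =
      σ ω - sInf {i | i ≤ σ ω ∧ S i ω = sInf ((fun j => S j ω) '' Set.Iic (σ ω))})
    (hG : ∀ ω, G ω = sSup {i | i ≤ σ ω ∧ S i ω = sSup ((fun j => S j ω) '' Set.Iic (σ ω))}) :
    μ.map F' = μ.map G := by
  have : IsProbabilityMeasure (μ.map (ζ 0)) :=
    Measure.isProbabilityMeasure_map (hmeas 0).aemeasurable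
  set X : Ω → ℕ → ℝ := fun ω i => ζ i ω
  have hX : Measurable X := measurable_pi_lambda _ hmeas
  have hlaw : μ.map X = Measure.infinitePi fun _ => μ.map (ζ 0) := by
    rw [hindep.map_fun_eq_infinitePi_map hmeas, funext hident]
  have hpath : ∀ ω, (fun i => S i ω) = walk (X ω) := fun ω => funext fun i => hS i ω
  set T : (ℕ → ℝ) → ℕ → ℝ := fun x => x ∘ revPerm (lastNonposTime n (walk x))
  have hT : MeasurePreserving T (μ.map X) (μ.map X) := hlaw ▸
    measurePreserving_fiberwise (measurable_lastNonposTime_walk n)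
      (fun k => measurePreserving_comp_perm_infinitePi _ (revPerm k))
      fun k x => lastNonposTime_walk_comp_revPerm_iff x k
  have hF'T : F' = (fun x => lastMaxTime n (walk x)) ∘ T ∘ X := by
    funext ω
    rw [show F' ω = timeAfterFirstMin n (fun i => S i ω) by rw [hF', hσ]; rfl, hpath]
    exact (lastMaxTime_walk_comp_revPerm rfl).symm
  have hGX : G = (fun x => lastMaxTime n (walk x)) ∘ X := by
    funext ω
    rw [show G ω = lastMaxTime n (fun i => S i ω) by rw [hG, hσ]; rfl, hpath]
    rfl
  have hmG := measurable_lastMaxTime_walk n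
  calc μ.map F' = ((μ.map X).map T).map fun x => lastMaxTime n (walk x) := by
        rw [hF'T, Measure.map_map hT.measurable hX, Measure.map_map hmG (hT.measurable.comp hX)]
    _ = μ.map G := by rw [hT.map_eq, hGX, Measure.map_map hmG hX]
end
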